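/- In any feasible price set: for p in K = {p ∈ ℝⁿ_{>0} : |p| = 1, p_max/p_min ≤ γψ̃}, the map f with f_j⁰(p) = |p|^{(1+2δ)/(1+δ)} (ψ_j P_j(p))^{1/(1+δ)} and f = f⁰/|f⁰| maps K into K, where |·| denotes geometric mean, P_j(p) = Σ_k C_{jk} p_k^{-δ}, ψ_j are the path-products with ψ_min = 1, ψ̃ = max_j ψ_j, and γ = max_i Σ_j C_{ij}. In particular f has a fixed point in K (by Brouwer), which satisfies detailed balance. -/

import Mathlib

open Finset

/-- `l` is a walk in the support graph of `C`. -/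
def isWalk {n : ℕ} (C : Matrix (Fin n) (Fin n) ℝ) (l : List (Fin n)) : Prop :=
  l.Chain' fun a b => 0 < C a b

/-!
Write `v_j(p) = ψ_j P_j(p)`. If all prices are within a factor `R` of each other, then every row
of `C` having an entry `1` and row sums at most `γ` puts the demands `P_j(p)` within a factor
`γ R^δ` of each other, so the `v_j` are within `γ ψ̃ R^δ`. On `K` we have `|p| = 1`, so `f(p)` is
`v^{1/(1+δ)}` up to a scalar, with price ratio at most `(γ ψ̃ (γ ψ̃)^δ)^{1/(1+δ)} = γ ψ̃`.

The fixed point is found variationally rather than by Brouwer. The matrix `S_jk = ψ_j C_jk` is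
symmetric, and in the coordinates `p = exp y` the energy
`∑_{j,k} S_jk e^{-δ y_j} e^{-δ y_k} + 2δ ∑_j e^{y_j}` is coercive on all of `ℝⁿ`, so it has a
global minimiser, where the partial derivatives vanish: `∑_k S_jk p_k^{-δ} = p_j^{1+δ}`. Rescaled
to `|p| = 1` this becomes `ψ_j P_j(p) = c p_j^{1+δ}`, which is exactly `f p = p`; the same identity
makes `p_i^{1+δ} C_ij / P_i(p) = ψ_i C_ij / c` symmetric in `i, j`, and, run through the ratio
estimate above with `R = p_max / p_min`, gives `R^{1+δ} ≤ γ ψ̃ R^δ`, i.e. `p ∈ K`.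
-/

open Real

lemma sup'_div_inf'_le_iff {ι : Type*} {s : Finset ι} (hs : s.Nonempty) {x : ι → ℝ}
    (hx : ∀ i ∈ s, 0 < x i) {R : ℝ} :
    s.sup' hs x / s.inf' hs x ≤ R ↔ ∀ i ∈ s, ∀ j ∈ s, x i ≤ R * x j := by
  obtain ⟨j₀, hj₀, hinf⟩ := exists_mem_eq_inf' hs x
  rw [div_le_iff₀ (hinf ▸ hx j₀ hj₀), sup'_le_iff, hinf]
  refine ⟨fun h i hi j hj => (h i hi).trans ?_, fun h i hi => h i hi j₀ hj₀⟩
  have hR : 0 ≤ R := (pos_of_mul_pos_left ((hx i hi).trans_le (h i hi)) (hx j₀ hj₀).le).le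
  exact mul_le_mul_of_nonneg_left (hinf ▸ inf'_le x hj) hR

lemma sup'_div_inf'_le_of_rpow_le {ι : Type*} {s : Finset ι} (hs : s.Nonempty) {x : ι → ℝ}
    (hx : ∀ i ∈ s, 0 < x i) {B δ : ℝ}
    (h : ∀ i ∈ s, ∀ j ∈ s,
      x i ^ (1 + δ) ≤ B * (s.sup' hs x / s.inf' hs x) ^ δ * x j ^ (1 + δ)) :
    s.sup' hs x / s.inf' hs x ≤ B := by
  obtain ⟨i, hi, hsup⟩ := exists_mem_eq_sup' hs x
  obtain ⟨j, hj, hinf⟩ := exists_mem_eq_inf' hs x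
  have hR : 0 < x i / x j := div_pos (hx i hi) (hx j hj)
  have hij := h i hi j hj
  rw [hsup, hinf] at hij ⊢
  rw [← div_le_iff₀ (rpow_pos_of_pos (hx j hj) _), ← div_rpow (hx i hi).le (hx j hj).le,
    rpow_add hR, rpow_one] at hij
  exact le_of_mul_le_mul_right hij (rpow_pos_of_pos hR δ)

variable {ι : Type*} [Fintype ι]

noncomputable def geomMean (x : ι → ℝ) : ℝ := (∏ i, x i) ^ ((Fintype.card ι : ℝ)⁻¹)

lemma geomMean_pos {x : ι → ℝ} (hx : ∀ i, 0 < x i) : 0 < geomMean x :=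
  rpow_pos_of_pos (prod_pos fun i _ => hx i) _

lemma geomMean_const_mul [Nonempty ι] {c : ℝ} (hc : 0 ≤ c) {x : ι → ℝ} (hx : ∀ i, 0 ≤ x i) :
    geomMean (fun i => c * x i) = c * geomMean x := by
  have hcard : (Fintype.card ι : ℝ) ≠ 0 := Nat.cast_ne_zero.2 Fintype.card_ne_zero
  rw [geomMean, geomMean, prod_mul_distrib, prod_const, card_univ,
    mul_rpow (pow_nonneg hc _) (prod_nonneg fun i _ => hx i), ← rpow_natCast,
    ← rpow_mul hc, mul_inv_cancel₀ hcard, rpow_one]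

lemma geomMean_div_geomMean [Nonempty ι] {x : ι → ℝ} (hx : ∀ i, 0 < x i) :
    geomMean (fun i => x i / geomMean x) = 1 := by
  have hg := geomMean_pos hx
  simp_rw [div_eq_inv_mul]
  rw [geomMean_const_mul (inv_nonneg.2 hg.le) fun i => (hx i).le, inv_mul_cancel₀ hg.ne']

section BalanceEnergy

noncomputable def balanceEnergy (S : ι → ι → ℝ) (δ : ℝ) (y : ι → ℝ) : ℝ :=
  ∑ j, ∑ k, S j k * (exp (-δ * y j) * exp (-δ * y k)) + 2 * δ * ∑ j, exp (y j)

variable {S : ι → ι → ℝ} {δ : ℝ}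

lemma continuous_balanceEnergy : Continuous (balanceEnergy S δ) := by
  unfold balanceEnergy
  fun_prop

lemma hasDerivAt_balanceEnergy_update [DecidableEq ι] (hS : ∀ j k, S j k = S k j)
    (y : ι → ℝ) (m : ι) :
    HasDerivAt (fun t => balanceEnergy S δ (Function.update y m t))
      (2 * δ * (exp (y m) - exp (-δ * y m) * ∑ k, S m k * exp (-δ * y k))) (y m) := by
  have hy : ∀ j, HasDerivAt (fun t => Function.update y m t j)
      ((Pi.single m 1 : ι → ℝ) j) (y m) :=
    fun j => hasDerivAt_pi.1 (hasDerivAt_update y m (y m)) j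
  have hw : ∀ j, HasDerivAt (fun t => exp (-δ * Function.update y m t j))
      (exp (-δ * y j) * (-δ * (Pi.single m 1 : ι → ℝ) j)) (y m) := fun j => by
    simpa using ((hy j).const_mul (-δ)).exp
  refine ((HasDerivAt.fun_sum (u := univ) fun j _ => HasDerivAt.fun_sum (u := univ) fun k _ =>
    ((hw j).fun_mul (hw k)).const_mul (S j k)).fun_add
      ((HasDerivAt.fun_sum (u := univ) fun j _ => (hy j).exp).const_mul (2 * δ))).congr_deriv ?_
  simp only [Function.update_eq_self, Pi.single_apply, mul_add, sum_add_distrib, mul_ite,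
    ite_mul, mul_zero, zero_mul, mul_one, sum_ite_eq', mem_univ, if_true, sum_ite_irrel,
    sum_const_zero]
  have hpair : ∀ k, S m k * (exp (-δ * y m) * -δ * exp (-δ * y k)) +
      S k m * (exp (-δ * y k) * (exp (-δ * y m) * -δ)) =
      -(2 * δ * exp (-δ * y m)) * (S m k * exp (-δ * y k)) := fun k => by rw [hS k m]; ring
  rw [← sum_add_distrib, sum_congr rfl fun k _ => hpair k, ← mul_sum]
  ring

lemma two_mul_mul_exp_le_balanceEnergy (hS : ∀ j k, 0 ≤ S j k) (hδ : 0 ≤ δ) (y : ι → ℝ)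
    (j : ι) : 2 * δ * exp (y j) ≤ balanceEnergy S δ y := by
  have hquad : 0 ≤ ∑ j, ∑ k, S j k * (exp (-δ * y j) * exp (-δ * y k)) :=
    sum_nonneg fun j _ => sum_nonneg fun k _ => mul_nonneg (hS j k) (by positivity)
  have hj : 2 * δ * exp (y j) ≤ 2 * δ * ∑ j, exp (y j) := mul_le_mul_of_nonneg_left
    (single_le_sum (fun i _ => (exp_pos _).le) (mem_univ j)) (by positivity)
  unfold balanceEnergy
  linarith

lemma mul_exp_mul_exp_le_balanceEnergy (hS : ∀ j k, 0 ≤ S j k) (hδ : 0 ≤ δ) (y : ι → ℝ)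
    (j k : ι) : S j k * (exp (-δ * y j) * exp (-δ * y k)) ≤ balanceEnergy S δ y := by
  have hjk : S j k * (exp (-δ * y j) * exp (-δ * y k)) ≤
      ∑ j, ∑ k, S j k * (exp (-δ * y j) * exp (-δ * y k)) :=
    (single_le_sum (f := fun l => S j l * (exp (-δ * y j) * exp (-δ * y l)))
      (fun l _ => mul_nonneg (hS j l) (by positivity)) (mem_univ k)).trans
      (single_le_sum (f := fun i => ∑ l, S i l * (exp (-δ * y i) * exp (-δ * y l)))
        (fun i _ => sum_nonneg fun l _ => mul_nonneg (hS i l) (by positivity)) (mem_univ j))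
  have hexp : 0 ≤ 2 * δ * ∑ j, exp (y j) := by positivity
  unfold balanceEnergy
  linarith

lemma exists_forall_balanceEnergy_le (hS : ∀ j k, 0 ≤ S j k) (hrow : ∀ j, ∃ k, 0 < S j k)
    (hδ : 0 < δ) : ∃ y, ∀ z, balanceEnergy S δ y ≤ balanceEnergy S δ z := by
  refine continuous_balanceEnergy.exists_forall_le' 0 (Filter.mem_cocompact'.2 ?_)
  set M := balanceEnergy S δ 0
  set hi := log (M / (2 * δ))
  choose k hk using hrow
  set lo : ι → ℝ := fun j => -log (M / (S j (k j) * exp (-δ * hi))) / δ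
  refine ⟨Set.Icc lo fun _ => hi, isCompact_Icc, fun z hz => ?_⟩
  have hzM : balanceEnergy S δ z ≤ M := (not_le.1 (show ¬ M ≤ _ from hz)).le
  have hz_le : ∀ j, z j ≤ hi := fun j => by
    have h : exp (z j) ≤ M / (2 * δ) := (le_div_iff₀' (by positivity)).2
      ((two_mul_mul_exp_le_balanceEnergy hS hδ.le z j).trans hzM)
    exact (le_log_iff_exp_le ((exp_pos _).trans_le h)).2 h
  refine ⟨fun j => ?_, hz_le⟩
  have hM : 0 < M := (by positivity : 0 < 2 * δ * exp 0).trans_le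
    (two_mul_mul_exp_le_balanceEnergy hS hδ.le 0 j)
  have hc : 0 < S j (k j) * exp (-δ * hi) := mul_pos (hk j) (exp_pos _)
  have hw : exp (-δ * hi) ≤ exp (-δ * z (k j)) := exp_le_exp.2 (by nlinarith [hz_le (k j)])
  have hjk := mul_exp_mul_exp_le_balanceEnergy hS hδ.le z j (k j)
  have hlog : -δ * z j ≤ log (M / (S j (k j) * exp (-δ * hi))) := by
    refine (le_log_iff_exp_le (by positivity)).2 ((le_div_iff₀' hc).2 ?_)
    calc S j (k j) * exp (-δ * hi) * exp (-δ * z j)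
        ≤ S j (k j) * (exp (-δ * z j) * exp (-δ * z (k j))) := by
          nlinarith [mul_le_mul_of_nonneg_left hw (mul_nonneg (hk j).le (exp_pos (-δ * z j)).le)]
      _ ≤ M := hjk.trans hzM
  show -log _ / δ ≤ z j
  rw [div_le_iff₀ hδ]
  linarith

end BalanceEnergy

theorem exists_pos_sum_div_rpow_eq_rpow {S : ι → ι → ℝ} (hS : ∀ j k, 0 ≤ S j k)
    (hsymm : ∀ j k, S j k = S k j) (hrow : ∀ j, ∃ k, 0 < S j k) {δ : ℝ} (hδ : 0 < δ) :
    ∃ p : ι → ℝ, (∀ j, 0 < p j) ∧ ∀ j, ∑ k, S j k / p k ^ δ = p j ^ (1 + δ) := by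
  classical
  obtain ⟨y, hy⟩ := exists_forall_balanceEnergy_le hS hrow hδ
  refine ⟨fun j => exp (y j), fun j => exp_pos _, fun m => ?_⟩
  have hmin : IsLocalMin (fun t => balanceEnergy S δ (Function.update y m t)) (y m) :=
    Filter.Eventually.of_forall fun t => by simpa using hy (Function.update y m t)
  have hcrit := hmin.hasDerivAt_eq_zero (hasDerivAt_balanceEnergy_update hsymm y m)
  have hbal : exp (-δ * y m) * ∑ k, S m k * exp (-δ * y k) = exp (y m) := by
    have := (mul_eq_zero.1 hcrit).resolve_left (by positivity)
    linarith
  have hsum : ∑ k, S m k / exp (y k) ^ δ = ∑ k, S m k * exp (-δ * y k) :=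
    sum_congr rfl fun k _ => by rw [← exp_mul, div_eq_mul_inv, ← exp_neg]; ring_nf
  rw [hsum, ← exp_mul]
  calc ∑ k, S m k * exp (-δ * y k)
      = exp (δ * y m) * (exp (-δ * y m) * ∑ k, S m k * exp (-δ * y k)) := by
        rw [← mul_assoc, ← exp_add, show δ * y m + -δ * y m = 0 by ring, exp_zero, one_mul]
    _ = exp (y m * (1 + δ)) := by rw [hbal, ← exp_add]; ring_nf

noncomputable def demand (C : ι → ι → ℝ) (δ : ℝ) (j : ι) (p : ι → ℝ) : ℝ :=
  ∑ k, C j k / p k ^ δ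

section Demand

variable {C : ι → ι → ℝ} {δ : ℝ}

lemma demand_pos (hC : ∀ i j, 0 ≤ C i j) (hrow : ∀ j, ∃ l, 1 ≤ C j l) {p : ι → ℝ}
    (hp : ∀ i, 0 < p i) (j : ι) : 0 < demand C δ j p := by
  obtain ⟨l, hl⟩ := hrow j
  exact sum_pos' (fun k _ => div_nonneg (hC j k) (rpow_nonneg (hp k).le δ))
    ⟨l, mem_univ l, div_pos (one_pos.trans_le hl) (rpow_pos_of_pos (hp l) δ)⟩

lemma demand_const_mul {t : ℝ} (ht : 0 < t) {p : ι → ℝ} (hp : ∀ i, 0 < p i) (j : ι) :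
    demand C δ j (fun k => t * p k) = (t ^ δ)⁻¹ * demand C δ j p := by
  rw [demand, demand, mul_sum]
  refine sum_congr rfl fun k _ => ?_
  rw [mul_rpow ht.le (hp k).le]
  field_simp

lemma demand_le_mul_demand (hC : ∀ i j, 0 ≤ C i j) (hrow : ∀ j, ∃ l, 1 ≤ C j l) {γ : ℝ}
    (hγ : ∀ i, ∑ k, C i k ≤ γ) (hδ : 0 ≤ δ) {r : ι → ℝ} (hr : ∀ i, 0 < r i) {R : ℝ}
    (hR : ∀ k l, r k ≤ R * r l) (i j : ι) :
    demand C δ i r ≤ γ * R ^ δ * demand C δ j r := by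
  obtain ⟨l, hl⟩ := hrow j
  have hR0 : 0 ≤ R := (pos_of_mul_pos_left ((hr l).trans_le (hR l l)) (hr l).le).le
  have hγ0 : 0 ≤ γ :=
    (zero_le_one.trans (hl.trans (single_le_sum (fun k _ => hC j k) (mem_univ l)))).trans (hγ j)
  have hrl : 0 < r l ^ δ := rpow_pos_of_pos (hr l) δ
  have hterm : ∀ k, C i k / r k ^ δ ≤ C i k * R ^ δ / r l ^ δ := fun k => by
    rw [div_le_div_iff₀ (rpow_pos_of_pos (hr k) δ) hrl, mul_assoc, ← mul_rpow hR0 (hr k).le]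
    exact mul_le_mul_of_nonneg_left (rpow_le_rpow (hr l).le (hR l k) hδ) (hC i k)
  calc demand C δ i r ≤ ∑ k, C i k * R ^ δ / r l ^ δ := sum_le_sum fun k _ => hterm k
    _ = (∑ k, C i k) * R ^ δ / r l ^ δ := by rw [← sum_div, ← sum_mul]
    _ ≤ γ * R ^ δ / r l ^ δ := by gcongr; exact hγ i
    _ ≤ γ * R ^ δ * (C j l / r l ^ δ) := by
        rw [div_eq_mul_one_div (γ * R ^ δ)]
        gcongr
    _ ≤ γ * R ^ δ * demand C δ j r := by
        gcongr
        exact single_le_sum (f := fun k => C j k / r k ^ δ)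
          (fun k _ => div_nonneg (hC j k) (rpow_nonneg (hr k).le δ)) (mem_univ l)

end Demand

noncomputable def priceMap₀ (C : ι → ι → ℝ) (ψ : ι → ℝ) (δ : ℝ) (p : ι → ℝ) (j : ι) : ℝ :=
  geomMean p ^ ((1 + 2 * δ) / (1 + δ)) * (ψ j * demand C δ j p) ^ (1 / (1 + δ))

noncomputable def priceMap (C : ι → ι → ℝ) (ψ : ι → ℝ) (δ : ℝ) (p : ι → ℝ) (j : ι) : ℝ :=
  priceMap₀ C ψ δ p j / geomMean (priceMap₀ C ψ δ p)

def boundedPrices [Nonempty ι] (B : ℝ) : Set (ι → ℝ) :=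
  {p | (∀ i, 0 < p i) ∧ geomMean p = 1 ∧
    univ.sup' univ_nonempty p / univ.inf' univ_nonempty p ≤ B}

lemma mem_boundedPrices_iff [Nonempty ι] {B : ℝ} {p : ι → ℝ} :
    p ∈ boundedPrices B ↔ (∀ i, 0 < p i) ∧ geomMean p = 1 ∧ ∀ i j, p i ≤ B * p j := by
  refine ⟨fun ⟨hp, hgm, hB⟩ => ⟨hp, hgm, ?_⟩, fun ⟨hp, hgm, hB⟩ => ⟨hp, hgm, ?_⟩⟩
  · simpa using (sup'_div_inf'_le_iff univ_nonempty fun i _ => hp i).1 hB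
  · exact (sup'_div_inf'_le_iff univ_nonempty fun i _ => hp i).2 fun i _ j _ => hB i j

section PriceMap

variable {C : ι → ι → ℝ} {ψ : ι → ℝ} {δ γ Ψ : ℝ}

lemma mul_demand_le_mul_demand (hC : ∀ i j, 0 ≤ C i j) (hrow : ∀ j, ∃ l, 1 ≤ C j l)
    (hγ : ∀ i, ∑ k, C i k ≤ γ) (hψ : ∀ j, 1 ≤ ψ j) (hΨ : ∀ j, ψ j ≤ Ψ) (hδ : 0 ≤ δ)
    {r : ι → ℝ} (hr : ∀ i, 0 < r i) {R : ℝ} (hR : ∀ k l, r k ≤ R * r l) (i j : ι) :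
    ψ i * demand C δ i r ≤ γ * Ψ * R ^ δ * (ψ j * demand C δ j r) := by
  have hdi := demand_pos hC hrow hr i (δ := δ)
  have hdj := demand_pos hC hrow hr j (δ := δ)
  have hij := demand_le_mul_demand hC hrow hγ hδ hr hR i j
  have hγR : 0 ≤ γ * R ^ δ := (pos_of_mul_pos_left (hdi.trans_le hij) hdj.le).le
  have hΨ0 : 0 ≤ Ψ := zero_le_one.trans ((hψ i).trans (hΨ i))
  calc ψ i * demand C δ i r ≤ Ψ * (γ * R ^ δ * demand C δ j r) :=
        mul_le_mul (hΨ i) hij hdi.le hΨ0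
    _ ≤ Ψ * (γ * R ^ δ * (ψ j * demand C δ j r)) := by
        gcongr
        exact le_mul_of_one_le_left hdj.le (hψ j)
    _ = γ * Ψ * R ^ δ * (ψ j * demand C δ j r) := by ring

theorem mapsTo_priceMap [Nonempty ι] (hC : ∀ i j, 0 ≤ C i j) (hrow : ∀ j, ∃ l, 1 ≤ C j l)
    (hγ : ∀ i, ∑ k, C i k ≤ γ) (hψ : ∀ j, 1 ≤ ψ j) (hΨ : ∀ j, ψ j ≤ Ψ) (hδ : 0 ≤ δ) :
    Set.MapsTo (priceMap C ψ δ) (boundedPrices (γ * Ψ)) (boundedPrices (γ * Ψ)) := by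
  intro p hp
  obtain ⟨hp, hgm, hB⟩ := mem_boundedPrices_iff.1 hp
  have hv : ∀ j, 0 < ψ j * demand C δ j p := fun j =>
    mul_pos (one_pos.trans_le (hψ j)) (demand_pos hC hrow hp j)
  have hf₀ : ∀ j, priceMap₀ C ψ δ p j = (ψ j * demand C δ j p) ^ (1 + δ)⁻¹ := fun j => by
    rw [priceMap₀, hgm, one_rpow, one_mul, one_div]
  have hf₀pos : ∀ j, 0 < priceMap₀ C ψ δ p j := fun j => hf₀ j ▸ rpow_pos_of_pos (hv j) _
  have hf₀B : ∀ i j, priceMap₀ C ψ δ p i ≤ γ * Ψ * priceMap₀ C ψ δ p j := fun i j => by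
    have hB0 : 0 < γ * Ψ := pos_of_mul_pos_left ((hp i).trans_le (hB i i)) (hp i).le
    have hvB := mul_demand_le_mul_demand hC hrow hγ hψ hΨ hδ hp hB i j
    rw [← rpow_one_add' hB0.le (by linarith)] at hvB
    rw [hf₀, hf₀, ← rpow_rpow_inv hB0.le (by linarith : 1 + δ ≠ 0),
      ← mul_rpow (by positivity) (hv j).le]
    exact rpow_le_rpow (hv i).le hvB (by positivity)
  refine mem_boundedPrices_iff.2 ⟨fun j => div_pos (hf₀pos j) (geomMean_pos hf₀pos),
    geomMean_div_geomMean hf₀pos, fun i j => ?_⟩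
  rw [priceMap, priceMap, mul_div_assoc']
  exact div_le_div_of_nonneg_right (hf₀B i j) (geomMean_pos hf₀pos).le

lemma exists_mul_demand_eq_mul_rpow [Nonempty ι] (hC : ∀ i j, 0 ≤ C i j)
    (hrow : ∀ j, ∃ l, 1 ≤ C j l) (hψ : ∀ j, 1 ≤ ψ j) (hψC : ∀ i j, ψ i * C i j = ψ j * C j i)
    (hδ : 0 < δ) :
    ∃ p : ι → ℝ, ∃ c : ℝ, (∀ j, 0 < p j) ∧ geomMean p = 1 ∧ 0 < c ∧
      ∀ j, ψ j * demand C δ j p = c * p j ^ (1 + δ) := by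
  obtain ⟨p₀, hp₀, hbal⟩ := exists_pos_sum_div_rpow_eq_rpow (S := fun j k => ψ j * C j k)
    (fun j k => mul_nonneg (zero_le_one.trans (hψ j)) (hC j k)) hψC
    (fun j => (hrow j).imp fun l hl => mul_pos (one_pos.trans_le (hψ j)) (one_pos.trans_le hl))
    hδ
  set g := geomMean p₀
  have hg : 0 < g := geomMean_pos hp₀
  set p : ι → ℝ := fun j => p₀ j / g
  have hp : ∀ j, 0 < p j := fun j => div_pos (hp₀ j) hg
  have hp₀p : p₀ = fun j => g * p j := funext fun j => (mul_div_cancel₀ _ hg.ne').symm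
  refine ⟨p, g ^ δ * g ^ (1 + δ), hp, geomMean_div_geomMean hp₀, by positivity, fun j => ?_⟩
  have h : ψ j * demand C δ j p₀ = p₀ j ^ (1 + δ) := by
    rw [demand, mul_sum]
    simpa only [mul_div_assoc] using hbal j
  rw [hp₀p, demand_const_mul hg hp, mul_rpow hg.le (hp j).le] at h
  have hgδ : g ^ δ ≠ 0 := by positivity
  calc ψ j * demand C δ j p = g ^ δ * (ψ j * ((g ^ δ)⁻¹ * demand C δ j p)) := by field_simp
    _ = g ^ δ * g ^ (1 + δ) * p j ^ (1 + δ) := by rw [h]; ring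

lemma priceMap_eq_self_of_mul_demand_eq [Nonempty ι] {p : ι → ℝ} (hp : ∀ j, 0 < p j)
    (hgm : geomMean p = 1) {c : ℝ} (hc : 0 < c)
    (hbal : ∀ j, ψ j * demand C δ j p = c * p j ^ (1 + δ)) (hδ : 0 ≤ δ) :
    priceMap C ψ δ p = p := by
  have hf₀ : priceMap₀ C ψ δ p = fun j => c ^ (1 + δ)⁻¹ * p j := funext fun j => by
    rw [priceMap₀, hgm, one_rpow, one_mul, hbal, one_div, mul_rpow hc.le (rpow_nonneg (hp j).le _),
      rpow_rpow_inv (hp j).le (by linarith)]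
  funext j
  rw [priceMap, hf₀, geomMean_const_mul (by positivity) fun i => (hp i).le, hgm, mul_one,
    mul_div_cancel_left₀ _ (by positivity)]

lemma mem_boundedPrices_of_mul_demand_eq [Nonempty ι] (hC : ∀ i j, 0 ≤ C i j)
    (hrow : ∀ j, ∃ l, 1 ≤ C j l) (hγ : ∀ i, ∑ k, C i k ≤ γ) (hψ : ∀ j, 1 ≤ ψ j)
    (hΨ : ∀ j, ψ j ≤ Ψ) (hδ : 0 ≤ δ) {p : ι → ℝ} (hp : ∀ j, 0 < p j) (hgm : geomMean p = 1)
    {c : ℝ} (hc : 0 < c) (hbal : ∀ j, ψ j * demand C δ j p = c * p j ^ (1 + δ)) :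
    p ∈ boundedPrices (γ * Ψ) := by
  refine ⟨hp, hgm, sup'_div_inf'_le_of_rpow_le (δ := δ) _ (fun i _ => hp i) fun i _ j _ => ?_⟩
  have hR := (sup'_div_inf'_le_iff univ_nonempty (x := p) fun i _ => hp i).1 le_rfl
  have hij := mul_demand_le_mul_demand hC hrow hγ hψ hΨ hδ hp
    (fun k l => hR k (mem_univ k) l (mem_univ l)) i j
  rw [hbal, hbal, mul_left_comm] at hij
  exact le_of_mul_le_mul_left hij hc

theorem exists_fixedPoint_priceMap [Nonempty ι] (hC : ∀ i j, 0 ≤ C i j)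
    (hrow : ∀ j, ∃ l, 1 ≤ C j l) (hγ : ∀ i, ∑ k, C i k ≤ γ) (hψ : ∀ j, 1 ≤ ψ j)
    (hΨ : ∀ j, ψ j ≤ Ψ) (hψC : ∀ i j, ψ i * C i j = ψ j * C j i) (hδ : 0 < δ) :
    ∃ p ∈ boundedPrices (γ * Ψ), priceMap C ψ δ p = p ∧
      ∀ i j, p i ^ (1 + δ) * C i j / demand C δ i p = p j ^ (1 + δ) * C j i / demand C δ j p := by
  obtain ⟨p, c, hp, hgm, hc, hbal⟩ := exists_mul_demand_eq_mul_rpow hC hrow hψ hψC hδ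
  refine ⟨p, mem_boundedPrices_of_mul_demand_eq hC hrow hγ hψ hΨ hδ.le hp hgm hc hbal,
    priceMap_eq_self_of_mul_demand_eq hp hgm hc hbal hδ.le, fun i j => ?_⟩
  have hflow : ∀ i j, p i ^ (1 + δ) * C i j / demand C δ i p = ψ i * C i j / c := fun i j => by
    rw [div_eq_div_iff (demand_pos hC hrow hp i).ne' hc.ne', mul_right_comm (ψ i), hbal i]
    ring
  rw [hflow, hflow, hψC]

end PriceMap

theorem fixed_point_map_preserves_K {n : ℕ} (hn : 2 ≤ n)
    (C : Matrix (Fin n) (Fin n) ℝ) (δ : ℝ) (hδ : 0 < δ)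
    (hCnn : ∀ i j, 0 ≤ C i j)
    (hnorm : ∀ i, (∀ j, C i j ≠ 0 → 1 ≤ C i j) ∧ ∃ j, C i j = 1)
    -- the path-product weights ψ, with ψ_min = 1 and ψ_i C_ij = ψ_j C_ji
    (ψ : Fin n → ℝ) (hψ1 : ∀ j, 1 ≤ ψ j)
    (hψid : ∀ i j, ψ i * C i j = ψ j * C j i)
    (γ ψt : ℝ)
    (hγ : γ = Finset.univ.sup' ⟨(⟨0, by omega⟩ : Fin n), Finset.mem_univ _⟩
      fun i => ∑ j, C i j)
    (hψt : ψt = Finset.univ.sup' ⟨(⟨0, by omega⟩ : Fin n), Finset.mem_univ _⟩ ψ)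
    -- geometric mean
    (gm : (Fin n → ℝ) → ℝ) (hgm : ∀ p, gm p = (∏ i, p i) ^ ((n : ℝ)⁻¹))
    (P : Fin n → (Fin n → ℝ) → ℝ) (hP : ∀ j p, P j p = ∑ k, C j k / p k ^ δ)
    (K : Set (Fin n → ℝ))
    (hK : K = {p | (∀ i, 0 < p i) ∧ gm p = 1 ∧
      (Finset.univ.sup' ⟨(⟨0, by omega⟩ : Fin n), Finset.mem_univ _⟩ p) /
        (Finset.univ.inf' ⟨(⟨0, by omega⟩ : Fin n), Finset.mem_univ _⟩ p) ≤ γ * ψt})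
    (f0 : (Fin n → ℝ) → Fin n → ℝ)
    (hf0 : ∀ p j, f0 p j = gm p ^ ((1 + 2 * δ) / (1 + δ)) * (ψ j * P j p) ^ (1 / (1 + δ)))
    (f : (Fin n → ℝ) → Fin n → ℝ)
    (hf : ∀ p j, f p j = f0 p j / gm (f0 p)) :
    Set.MapsTo f K K ∧
    ∃ p ∈ K, f p = p ∧
      ∀ i j, p i ^ (1 + δ) * C i j / P i p = p j ^ (1 + δ) * C j i / P j p := by
  have : Nonempty (Fin n) := ⟨⟨0, by omega⟩⟩
  obtain rfl : gm = geomMean := funext fun p => by rw [hgm, geomMean, Fintype.card_fin]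
  obtain rfl : P = demand C δ := funext fun j => funext (hP j)
  obtain rfl : f0 = priceMap₀ C ψ δ := funext fun p => funext (hf0 p)
  obtain rfl : f = priceMap C ψ δ := funext fun p => funext (hf p)
  obtain rfl : K = boundedPrices (γ * ψt) := hK
  have hrow : ∀ j, ∃ l, 1 ≤ C j l := fun j => (hnorm j).2.imp fun _ h => h.ge
  have hrowsum : ∀ i, ∑ k, C i k ≤ γ := fun i => hγ ▸ le_sup' (fun i => ∑ j, C i j) (mem_univ i)
  have hψψt : ∀ j, ψ j ≤ ψt := fun j => hψt ▸ le_sup' ψ (mem_univ j)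
  exact ⟨mapsTo_priceMap hCnn hrow hrowsum hψ1 hψψt hδ.le,
    exists_fixedPoint_priceMap hCnn hrow hrowsum hψ1 hψψt hψid hδ⟩
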